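/- Let R be a normalized root system in ℝⁿ with positive subsystem R₊, let β ∈ R, and let k : R → [0,∞) satisfy k(−α) = k(α) and k(σ_β α) = k(α) for all α ∈ R. Let S ⊆ R₊ be such that the symmetric set S ∪ (−S) is invariant under σ_β. Define the partial-jump generator G u(x) = (1/2)Δu(x) + Σ_{α∈R₊} k(α)·⟨∇u(x),α⟩/⟨x,α⟩ + Σ_{α∈S} k(α)·(u(σ_α x) − u(x))/⟨x,α⟩². Then G commutes with σ_β: for every twice continuously differentiable u : ℝⁿ → ℝ and every x with ⟨x,α⟩ ≠ 0 for all α ∈ R, G(u∘σ_β)(x) = (G u)(σ_β x). -/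

import Mathlib

/-!
`σ_β` is a linear isometry `A`, so the Laplacian commutes with it and `∇(u ∘ A)(x) = A⁻¹ ∇u(A x)`.
After these substitutions, and using `k ∘ A = k`, the drift and jump sums over a set `P` turn into
the same sums taken over `A(P)`. Their summands are even in `α`, so a sum over a positive half `P`
of a symmetric set `T` is half the sum over `T`; as `A` permutes `T` (`T = R` for the drift,
`T = S ∪ -S` for the jumps), the sums over `A(P)` and over `P` agree.
-/

open scoped RealInnerProductSpace BigOperators

/-- Reflection `σ_α` with respect to the hyperplane orthogonal to `α`:
`σ_α(x) = x - 2(⟨α,x⟩/⟨α,α⟩)α`. -/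
noncomputable def rootReflection {n : ℕ} (α x : EuclideanSpace ℝ (Fin n)) :
    EuclideanSpace ℝ (Fin n) :=
  x - (2 * ⟪α, x⟫ / ⟪α, α⟫) • α

/-- Euclidean Laplacian, as the sum of pure second derivatives in the coordinate directions. -/
noncomputable def laplacian {n : ℕ} (f : EuclideanSpace ℝ (Fin n) → ℝ)
    (x : EuclideanSpace ℝ (Fin n)) : ℝ :=
  ∑ i : Fin n,
    iteratedFDeriv ℝ 2 f x ![EuclideanSpace.single i 1, EuclideanSpace.single i 1]

/-- `R` is a (restricted) root system in `ℝⁿ`: a finite set of nonzero vectors such that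
`R ∩ ℝα = {α, -α}` and `σ_α(R) = R` for all `α ∈ R`. -/
def IsRootSystem {n : ℕ} (R : Finset (EuclideanSpace ℝ (Fin n))) : Prop :=
  (∀ α ∈ R, α ≠ 0) ∧ (∀ α ∈ R, -α ∈ R) ∧
    (∀ α ∈ R, ∀ c : ℝ, c • α ∈ R → c • α = α ∨ c • α = -α) ∧
    (∀ α ∈ R, ∀ β ∈ R, rootReflection α β ∈ R)

/-- `Rp` is a positive subsystem of `R`: it contains exactly one of `α, -α` for each `α ∈ R`. -/
def IsPositiveSubsystem {n : ℕ} (R Rp : Finset (EuclideanSpace ℝ (Fin n))) : Prop :=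
  Rp ⊆ R ∧ ∀ α ∈ R, Xor' (α ∈ Rp) (-α ∈ Rp)

open InnerProductSpace
open scoped Laplacian

section LinearIsometryEquiv

variable {E G F : Type*} [NormedAddCommGroup E] [InnerProductSpace ℝ E]
  [NormedAddCommGroup G] [InnerProductSpace ℝ G] [NormedAddCommGroup F] [NormedSpace ℝ F]

theorem LinearIsometryEquiv.iteratedFDeriv_comp_right (A : E ≃ₗᵢ[ℝ] G) (f : G → F) (x : E)
    (i : ℕ) :
    iteratedFDeriv ℝ i (f ∘ A) x =
      (iteratedFDeriv ℝ i f (A x)).compContinuousLinearMap fun _ => (A : E →L[ℝ] G) := by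
  simpa [iteratedFDerivWithin_univ] using
    A.toContinuousLinearEquiv.iteratedFDerivWithin_comp_right f uniqueDiffOn_univ
      (Set.mem_univ (A x)) i

theorem laplacian_comp_linearIsometryEquiv [FiniteDimensional ℝ E] [FiniteDimensional ℝ G]
    (A : E ≃ₗᵢ[ℝ] G) (f : G → F) (x : E) :
    Δ (f ∘ A) x = Δ f (A x) := by
  let b := stdOrthonormalBasis ℝ E
  rw [laplacian_eq_iteratedFDeriv_orthonormalBasis _ b,
    laplacian_eq_iteratedFDeriv_orthonormalBasis _ (b.map A)]
  refine Finset.sum_congr rfl fun i _ => ?_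
  rw [A.iteratedFDeriv_comp_right, ContinuousMultilinearMap.compContinuousLinearMap_apply]
  congr 1
  funext j
  fin_cases j <;> rfl

theorem gradient_comp_linearIsometryEquiv [CompleteSpace E] [CompleteSpace G]
    (A : E ≃ₗᵢ[ℝ] G) (f : G → ℝ) (x : E) :
    gradient (f ∘ A) x = A.symm (gradient f (A x)) := by
  refine ext_inner_right ℝ fun v => ?_
  have hfderiv := A.toContinuousLinearEquiv.comp_right_fderiv (f := f) (x := x)
  rw [A.symm.inner_map_eq_flip, gradient, gradient, toDual_symm_apply, toDual_symm_apply]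
  exact congrArg (· v) hfderiv

end LinearIsometryEquiv

variable {n : ℕ}

theorem laplacian_eq_innerProductSpace_laplacian (f : EuclideanSpace ℝ (Fin n) → ℝ)
    (x : EuclideanSpace ℝ (Fin n)) :
    laplacian f x = Δ f x := by
  simp [laplacian,
    laplacian_eq_iteratedFDeriv_orthonormalBasis f (EuclideanSpace.basisFun (Fin n) ℝ)]

-- Also for `β = 0`: `rootReflection 0` is the identity (through `0 / 0 = 0`), and so is the
-- reflection in `(ℝ ∙ 0)ᗮ = ⊤`.
theorem rootReflection_eq_reflection (β : EuclideanSpace ℝ (Fin n)) :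
    rootReflection β = Submodule.reflection (ℝ ∙ β)ᗮ := by
  ext1 x
  rw [rootReflection, Submodule.reflection_apply, Submodule.starProjection_orthogonal_val,
    Submodule.starProjection_singleton, ← real_inner_self_eq_norm_sq]
  simp only [RCLike.ofReal_real_eq_id, id_eq]
  module

theorem rootReflection_neg (α x : EuclideanSpace ℝ (Fin n)) :
    rootReflection (-α) x = rootReflection α x := by
  simp only [rootReflection, inner_neg_left, inner_neg_right, neg_neg, smul_neg, mul_neg, neg_div,
    neg_smul]

theorem LinearIsometryEquiv.map_rootReflection
    (A : EuclideanSpace ℝ (Fin n) ≃ₗᵢ[ℝ] EuclideanSpace ℝ (Fin n))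
    (α x : EuclideanSpace ℝ (Fin n)) :
    A (rootReflection α x) = rootReflection (A α) (A x) := by
  simp only [rootReflection, A.inner_map_map, map_sub, map_smul]

namespace IsPositiveSubsystem

variable {T P : Finset (EuclideanSpace ℝ (Fin n))}

theorem neg_notMem (hP : IsPositiveSubsystem T P) {α : EuclideanSpace ℝ (Fin n)} (hα : α ∈ P) :
    -α ∉ P :=
  (xor_iff_iff_not.1 (hP.2 α (hP.1 hα))).1 hα

theorem sum_eq_two_mul (hP : IsPositiveSubsystem T P) (hneg : ∀ α ∈ T, -α ∈ T)
    {f : EuclideanSpace ℝ (Fin n) → ℝ} (hf : ∀ α ∈ T, f (-α) = f α) :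
    ∑ α ∈ T, f α = 2 * ∑ α ∈ P, f α := by
  classical
  have hdisj : Disjoint P (P.image Neg.neg) := by
    refine Finset.disjoint_left.2 fun α hα hα' => ?_
    obtain ⟨γ, hγ, rfl⟩ := Finset.mem_image.1 hα'
    exact hP.neg_notMem hγ hα
  have hcover : T = P ∪ P.image Neg.neg := by
    ext α
    simp only [Finset.mem_union, Finset.mem_image, neg_eq_iff_eq_neg, exists_eq_right]
    refine ⟨fun hα => Xor.or (hP.2 α hα), ?_⟩
    rintro (hα | hα)
    · exact hP.1 hα
    · simpa using hneg _ (hP.1 hα)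
  rw [hcover, Finset.sum_union hdisj, Finset.sum_image neg_injective.injOn, two_mul]
  exact congrArg _ (Finset.sum_congr rfl fun α hα => hf α (hP.1 hα))

theorem sum_comp_eq (hP : IsPositiveSubsystem T P) (hneg : ∀ α ∈ T, -α ∈ T)
    {A : EuclideanSpace ℝ (Fin n) → EuclideanSpace ℝ (Fin n)} (hA : Function.Injective A)
    (hAneg : ∀ α, A (-α) = -A α) (hAT : ∀ α ∈ T, A α ∈ T)
    {f : EuclideanSpace ℝ (Fin n) → ℝ} (hf : ∀ α ∈ T, f (-α) = f α) :
    ∑ α ∈ P, f (A α) = ∑ α ∈ P, f α := by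
  classical
  have hAT_eq : T.image A = T :=
    Finset.eq_of_subset_of_card_le (Finset.image_subset_iff.2 hAT)
      (Finset.card_image_of_injective T hA).ge
  have hsum : ∑ α ∈ T, f (A α) = ∑ α ∈ T, f α := by
    rw [← Finset.sum_image hA.injOn, hAT_eq]
  have hdouble := hP.sum_eq_two_mul hneg (f := fun α => f (A α))
    fun α hα => by rw [hAneg, hf _ (hAT α hα)]
  linarith [hP.sum_eq_two_mul hneg hf]

theorem union_image_neg_of_subset {R Rp S : Finset (EuclideanSpace ℝ (Fin n))}
    (hRp : IsPositiveSubsystem R Rp) (hS : S ⊆ Rp) :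
    IsPositiveSubsystem (S ∪ S.image fun a => -a) S := by
  refine ⟨Finset.subset_union_left, fun α hα => ?_⟩
  rcases Finset.mem_union.1 hα with hα | hα
  · exact Or.inl ⟨hα, fun h => hRp.neg_notMem (hS hα) (hS h)⟩
  · obtain ⟨γ, hγ, rfl⟩ := Finset.mem_image.1 hα
    rw [neg_neg]
    exact Or.inr ⟨hγ, fun h => hRp.neg_notMem (hS hγ) (hS h)⟩

end IsPositiveSubsystem

theorem neg_mem_union_image_neg {V : Type*} [InvolutiveNeg V] [DecidableEq V] {S : Finset V}
    {α : V} (hα : α ∈ S ∪ S.image fun a => -a) : -α ∈ S ∪ S.image fun a => -a := by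
  simp only [Finset.mem_union, Finset.mem_image, neg_eq_iff_eq_neg, exists_eq_right,
    neg_neg] at hα ⊢
  exact hα.symm

noncomputable def driftTerm (k : EuclideanSpace ℝ (Fin n) → ℝ)
    (P : Finset (EuclideanSpace ℝ (Fin n))) (u : EuclideanSpace ℝ (Fin n) → ℝ)
    (x : EuclideanSpace ℝ (Fin n)) : ℝ :=
  ∑ α ∈ P, k α * ⟪gradient u x, α⟫ / ⟪x, α⟫

noncomputable def jumpTerm (k : EuclideanSpace ℝ (Fin n) → ℝ)
    (S : Finset (EuclideanSpace ℝ (Fin n))) (u : EuclideanSpace ℝ (Fin n) → ℝ)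
    (x : EuclideanSpace ℝ (Fin n)) : ℝ :=
  ∑ α ∈ S, k α * (u (rootReflection α x) - u x) / ⟪x, α⟫ ^ 2

section Equivariance

variable {T P : Finset (EuclideanSpace ℝ (Fin n))}
  {A : EuclideanSpace ℝ (Fin n) ≃ₗᵢ[ℝ] EuclideanSpace ℝ (Fin n)} {k : EuclideanSpace ℝ (Fin n) → ℝ}

theorem driftTerm_comp_linearIsometryEquiv (hP : IsPositiveSubsystem T P)
    (hneg : ∀ α ∈ T, -α ∈ T) (hAT : ∀ α ∈ T, A α ∈ T) (hkneg : ∀ α ∈ T, k (-α) = k α)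
    (hkA : ∀ α ∈ P, k (A α) = k α) (u : EuclideanSpace ℝ (Fin n) → ℝ)
    (x : EuclideanSpace ℝ (Fin n)) :
    driftTerm k P (u ∘ A) x = driftTerm k P u (A x) :=
  calc driftTerm k P (u ∘ A) x
      = ∑ α ∈ P, k (A α) * ⟪gradient u (A x), A α⟫ / ⟪A x, A α⟫ :=
        Finset.sum_congr rfl fun α hα => by
          rw [hkA α hα, A.inner_map_map, gradient_comp_linearIsometryEquiv,
            A.symm.inner_map_eq_flip, A.symm_symm]
    _ = driftTerm k P u (A x) :=
        hP.sum_comp_eq hneg A.injective (map_neg A) hAT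
          (f := fun γ => k γ * ⟪gradient u (A x), γ⟫ / ⟪A x, γ⟫) fun α hα => by
          rw [hkneg α hα, inner_neg_right, inner_neg_right, mul_neg, neg_div_neg_eq]

theorem jumpTerm_comp_linearIsometryEquiv (hP : IsPositiveSubsystem T P)
    (hneg : ∀ α ∈ T, -α ∈ T) (hAT : ∀ α ∈ T, A α ∈ T) (hkneg : ∀ α ∈ T, k (-α) = k α)
    (hkA : ∀ α ∈ P, k (A α) = k α) (u : EuclideanSpace ℝ (Fin n) → ℝ)
    (x : EuclideanSpace ℝ (Fin n)) :
    jumpTerm k P (u ∘ A) x = jumpTerm k P u (A x) :=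
  calc jumpTerm k P (u ∘ A) x
      = ∑ α ∈ P, k (A α) * (u (rootReflection (A α) (A x)) - u (A x)) / ⟪A x, A α⟫ ^ 2 :=
        Finset.sum_congr rfl fun α hα => by
          rw [hkA α hα, A.inner_map_map, ← A.map_rootReflection]
          rfl
    _ = jumpTerm k P u (A x) :=
        hP.sum_comp_eq hneg A.injective (map_neg A) hAT
          (f := fun γ => k γ * (u (rootReflection γ (A x)) - u (A x)) / ⟪A x, γ⟫ ^ 2)
          fun α hα => by rw [hkneg α hα, rootReflection_neg, inner_neg_right, neg_sq]

end Equivariance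

open scoped Classical

theorem partial_jump_generator_commutes_with_reflection_general {n : ℕ}
    (R Rp : Finset (EuclideanSpace ℝ (Fin n)))
    (hR : IsRootSystem R)
    (hRp : IsPositiveSubsystem R Rp)
    (β : EuclideanSpace ℝ (Fin n)) (hβ : β ∈ R)
    (k : EuclideanSpace ℝ (Fin n) → ℝ)
    (hkneg : ∀ α ∈ R, k (-α) = k α)
    (hkβ : ∀ α ∈ R, k (rootReflection β α) = k α)
    (S : Finset (EuclideanSpace ℝ (Fin n))) (hS : S ⊆ Rp)
    (hSinv : (S ∪ S.image (fun a => -a)).image (fun a => rootReflection β a)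
      = S ∪ S.image (fun a => -a)) :
    ∀ u : EuclideanSpace ℝ (Fin n) → ℝ, ContDiff ℝ 2 u →
      ∀ x : EuclideanSpace ℝ (Fin n), (∀ α ∈ R, ⟪x, α⟫ ≠ 0) →
        (1 / 2) * laplacian (fun y => u (rootReflection β y)) x
            + ∑ α ∈ Rp, k α * ⟪gradient (fun y => u (rootReflection β y)) x, α⟫ / ⟪x, α⟫
            + ∑ α ∈ S, k α * (u (rootReflection β (rootReflection α x))
                - u (rootReflection β x)) / ⟪x, α⟫ ^ 2
          = (1 / 2) * laplacian u (rootReflection β x)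
            + ∑ α ∈ Rp, k α * ⟪gradient u (rootReflection β x), α⟫ / ⟪rootReflection β x, α⟫
            + ∑ α ∈ S, k α * (u (rootReflection α (rootReflection β x))
                - u (rootReflection β x)) / ⟪rootReflection β x, α⟫ ^ 2 := by
  intro u _ x _
  obtain ⟨-, hRneg, -, hRrefl⟩ := hR
  set T := S ∪ S.image fun a => -a
  have hTR : T ⊆ R := Finset.union_subset (hS.trans hRp.1)
    (Finset.image_subset_iff.2 fun α hα => hRneg α (hRp.1 (hS hα)))
  have hTneg : ∀ α ∈ T, -α ∈ T := fun α hα => neg_mem_union_image_neg hα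
  have hAR : ∀ α ∈ R, rootReflection β α ∈ R := hRrefl β hβ
  have hAT : ∀ α ∈ T, rootReflection β α ∈ T := fun α hα => hSinv ▸ Finset.mem_image_of_mem _ hα
  rw [rootReflection_eq_reflection β] at hkβ hAR hAT ⊢
  set A := Submodule.reflection (ℝ ∙ β)ᗮ
  change (1 / 2) * laplacian (u ∘ A) x + driftTerm k Rp (u ∘ A) x + jumpTerm k S (u ∘ A) x
    = (1 / 2) * laplacian u (A x) + driftTerm k Rp u (A x) + jumpTerm k S u (A x)
  rw [laplacian_eq_innerProductSpace_laplacian, laplacian_eq_innerProductSpace_laplacian,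
    laplacian_comp_linearIsometryEquiv,
    driftTerm_comp_linearIsometryEquiv hRp hRneg hAR hkneg fun α hα => hkβ α (hRp.1 hα),
    jumpTerm_comp_linearIsometryEquiv (hRp.union_image_neg_of_subset hS) hTneg hAT
      (fun α hα => hkneg α (hTR hα)) fun α hα => hkβ α (hRp.1 (hS hα))]

/-- The partial-jump Dunkl generator `G` associated with a σ_β-invariant symmetric set of jump
directions `S ∪ (-S)` commutes with the reflection `σ_β`: `G(u ∘ σ_β)(x) = (G u)(σ_β x)`. -/
theorem partial_jump_generator_commutes_with_reflection {n : ℕ}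
    (R Rp : Finset (EuclideanSpace ℝ (Fin n)))
    (hR : IsRootSystem R) (hnorm : ∀ α ∈ R, ⟪α, α⟫ = (2 : ℝ))
    (hRp : IsPositiveSubsystem R Rp)
    (β : EuclideanSpace ℝ (Fin n)) (hβ : β ∈ R)
    (k : EuclideanSpace ℝ (Fin n) → ℝ) (hk0 : ∀ α ∈ R, 0 ≤ k α)
    (hkneg : ∀ α ∈ R, k (-α) = k α)
    (hkβ : ∀ α ∈ R, k (rootReflection β α) = k α)
    (S : Finset (EuclideanSpace ℝ (Fin n))) (hS : S ⊆ Rp)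
    (hSinv : (S ∪ S.image (fun a => -a)).image (fun a => rootReflection β a)
      = S ∪ S.image (fun a => -a)) :
    ∀ u : EuclideanSpace ℝ (Fin n) → ℝ, ContDiff ℝ 2 u →
      ∀ x : EuclideanSpace ℝ (Fin n), (∀ α ∈ R, ⟪x, α⟫ ≠ 0) →
        (1 / 2) * laplacian (fun y => u (rootReflection β y)) x
            + ∑ α ∈ Rp, k α * ⟪gradient (fun y => u (rootReflection β y)) x, α⟫ / ⟪x, α⟫
            + ∑ α ∈ S, k α * (u (rootReflection β (rootReflection α x))
                - u (rootReflection β x)) / ⟪x, α⟫ ^ 2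
          = (1 / 2) * laplacian u (rootReflection β x)
            + ∑ α ∈ Rp, k α * ⟪gradient u (rootReflection β x), α⟫ / ⟪rootReflection β x, α⟫
            + ∑ α ∈ S, k α * (u (rootReflection α (rootReflection β x))
                - u (rootReflection β x)) / ⟪rootReflection β x, α⟫ ^ 2 :=
  partial_jump_generator_commutes_with_reflection_general R Rp hR hRp β hβ k hkneg hkβ S hS hSinv
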